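/- Let a < b and c < d be real numbers and t > 0. Then | ∫_c^d ( ∫_a^b p_t(x,y) dy − χ_{(a,b)}(x) ) dx | ≤ 4√t, where χ_{(a,b)} is the characteristic function of the open interval (a,b). -/

import Mathlib

/-!
Write `F_x(e) = ∫_{y ≤ e} p_t(x,y) dy`. Off the null set `{b}`, the integrand equals
`(F_x(b) - 1_{x ≤ b}) - (F_x(a) - 1_{x ≤ a})`, and each bracket is the mass of a Gaussian tail
beyond distance `|x - e|`, which is at most `exp(-(x - e)²/(4t))/2` because
`(s + r)² ≥ s² + r²` for `s, r ≥ 0`. Integrating both bounds over all of `ℝ` gives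
`√(4πt) ≤ 4√t`.
-/

open MeasureTheory Real Filter

/-- The Gaussian heat kernel on `ℝ`. -/
noncomputable def heatKernel (t x y : ℝ) : ℝ :=
  (4 * Real.pi * t) ^ (-(1 : ℝ) / 2) * Real.exp (-(x - y) ^ 2 / (4 * t))

open Set

theorem setIntegral_Ioi_comp_add_right {E : Type*} [NormedAddCommGroup E] [NormedSpace ℝ E]
    (f : ℝ → E) (c d : ℝ) : ∫ y in Ioi c, f (y + d) = ∫ z in Ioi (c + d), f z := by
  have h := (measurePreserving_add_right volume d).setIntegral_preimage_emb
    (measurableEmbedding_addRight d) f (Ioi (c + d))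
  rwa [preimage_add_const_Ioi, add_sub_cancel_right] at h

theorem setIntegral_Ioi_exp_neg_mul_sq_le {β : ℝ} (hβ : 0 < β) {r : ℝ} (hr : 0 ≤ r) :
    ∫ z in Ioi r, exp (-β * z ^ 2) ≤ exp (-β * r ^ 2) * (√(π / β) / 2) := by
  have hint := integrable_exp_neg_mul_sq hβ
  calc ∫ z in Ioi r, exp (-β * z ^ 2) = ∫ s in Ioi 0, exp (-β * (s + r) ^ 2) := by
        rw [setIntegral_Ioi_comp_add_right (fun z => exp (-β * z ^ 2)), zero_add]
    _ ≤ ∫ s in Ioi 0, exp (-β * r ^ 2) * exp (-β * s ^ 2) := by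
        refine setIntegral_mono_on (hint.comp_add_right r).integrableOn
          (hint.const_mul _).integrableOn measurableSet_Ioi fun s (hs : 0 < s) => ?_
        rw [← exp_add, exp_le_exp]
        nlinarith [mul_nonneg (mul_nonneg hβ.le hs.le) hr]
    _ = exp (-β * r ^ 2) * (√(π / β) / 2) := by
        rw [integral_const_mul, integral_gaussian_Ioi]

theorem integral_exp_neg_mul_sq_sub (β e : ℝ) :
    ∫ x, exp (-β * (x - e) ^ 2) = √(π / β) :=
  (integral_sub_right_eq_self (fun x => exp (-β * x ^ 2)) e).trans (integral_gaussian β)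

variable {t : ℝ}

theorem heatKernel_eq (t x y : ℝ) :
    heatKernel t x y = (4 * π * t) ^ (-(1 : ℝ) / 2) * exp (-(4 * t)⁻¹ * (y - x) ^ 2) := by
  rw [heatKernel]
  congr 2
  ring

theorem heatKernel_nonneg (ht : 0 ≤ t) (x y : ℝ) : 0 ≤ heatKernel t x y := by
  unfold heatKernel
  positivity

theorem heatKernel_neg_neg (t x y : ℝ) : heatKernel t (-x) (-y) = heatKernel t x y := by
  rw [heatKernel, heatKernel, neg_sub_neg, ← neg_sub, neg_sq]

theorem heatKernel_const_mul_sqrt (ht : 0 < t) :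
    (4 * π * t) ^ (-(1 : ℝ) / 2) * √(π / (4 * t)⁻¹) = 1 := by
  have hpos : 0 < 4 * π * t := by positivity
  rw [div_inv_eq_mul, ← mul_assoc, mul_comm π, sqrt_eq_rpow, ← rpow_add hpos]
  norm_num

theorem integrable_heatKernel (ht : 0 < t) (x : ℝ) : Integrable (heatKernel t x) := by
  simp_rw [funext (heatKernel_eq t x)]
  exact ((integrable_exp_neg_mul_sq (by positivity)).comp_sub_right x).const_mul _

theorem integral_heatKernel (ht : 0 < t) (x : ℝ) : ∫ y, heatKernel t x y = 1 := by
  simp_rw [heatKernel_eq, integral_const_mul, integral_exp_neg_mul_sq_sub]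
  exact heatKernel_const_mul_sqrt ht

theorem setIntegral_Ioi_heatKernel_le (ht : 0 < t) {x e : ℝ} (hxe : x ≤ e) :
    ∫ y in Ioi e, heatKernel t x y ≤ exp (-(4 * t)⁻¹ * (x - e) ^ 2) / 2 := by
  have hc : 0 ≤ (4 * π * t) ^ (-(1 : ℝ) / 2) := by positivity
  simp_rw [heatKernel_eq, integral_const_mul, sub_eq_add_neg _ x,
    setIntegral_Ioi_comp_add_right (fun z => exp (-(4 * t)⁻¹ * z ^ 2))]
  calc _ ≤ (4 * π * t) ^ (-(1 : ℝ) / 2) *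
        (exp (-(4 * t)⁻¹ * (e + -x) ^ 2) * (√(π / (4 * t)⁻¹) / 2)) :=
        mul_le_mul_of_nonneg_left
          (setIntegral_Ioi_exp_neg_mul_sq_le (by positivity) (by linarith)) hc
    _ = _ := by
        rw [mul_left_comm, mul_div_assoc', heatKernel_const_mul_sqrt ht]
        ring_nf

theorem setIntegral_Iic_heatKernel_le (ht : 0 < t) {x e : ℝ} (hex : e ≤ x) :
    ∫ y in Iic e, heatKernel t x y ≤ exp (-(4 * t)⁻¹ * (x - e) ^ 2) / 2 := by
  simp_rw [← heatKernel_neg_neg t x, integral_comp_neg_Iic (f := heatKernel t (-x))]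
  convert setIntegral_Ioi_heatKernel_le ht (neg_le_neg hex) using 3
  ring

theorem abs_setIntegral_Iic_heatKernel_sub_indicator_le (ht : 0 < t) (x e : ℝ) :
    |(∫ y in Iic e, heatKernel t x y) - (Iic e).indicator (fun _ => 1) x|
      ≤ exp (-(4 * t)⁻¹ * (x - e) ^ 2) / 2 := by
  have hnonneg (s : Set ℝ) : 0 ≤ ∫ y in s, heatKernel t x y :=
    integral_nonneg (heatKernel_nonneg ht.le x)
  rcases le_or_gt x e with hxe | hex
  · have hsplit : (∫ y in Iic e, heatKernel t x y) + ∫ y in Ioi e, heatKernel t x y = 1 := by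
      rw [← compl_Iic, integral_add_compl measurableSet_Iic (integrable_heatKernel ht x),
        integral_heatKernel ht]
    rw [indicator_of_mem (mem_Iic.2 hxe), abs_sub_comm,
      abs_of_nonneg (by linarith [hnonneg (Ioi e)])]
    linarith [setIntegral_Ioi_heatKernel_le ht hxe]
  · rw [indicator_of_notMem (notMem_Iic.2 hex), sub_zero, abs_of_nonneg (hnonneg _)]
    exact setIntegral_Iic_heatKernel_le ht hex.le

theorem norm_intervalIntegral_le_integral_of_norm_le {E : Type*} [NormedAddCommGroup E]
    [NormedSpace ℝ E] {μ : Measure ℝ} {f : ℝ → E} {g : ℝ → ℝ} (hg : Integrable g μ)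
    (hfg : ∀ᵐ x ∂μ, ‖f x‖ ≤ g x) (c d : ℝ) :
    ‖∫ x in c..d, f x ∂μ‖ ≤ ∫ x, g x ∂μ := by
  rw [intervalIntegral.norm_integral_eq_norm_integral_uIoc]
  exact (norm_integral_le_of_norm_le hg.integrableOn (ae_restrict_of_ae hfg)).trans
    (setIntegral_le_integral hg (hfg.mono fun x hx => (norm_nonneg _).trans hx))

theorem sqrt_pi_div_inv_four_mul_le (ht : 0 ≤ t) : √(π / (4 * t)⁻¹) ≤ 4 * √t := by
  rw [div_inv_eq_mul, show 4 * √t = √(4 ^ 2 * t) by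
    rw [sqrt_mul (by norm_num), sqrt_sq (by norm_num)]]
  exact sqrt_le_sqrt (by nlinarith [pi_le_four])

theorem stmt_16_general (a b c d t : ℝ) (hab : a < b) (ht : 0 < t) :
    |∫ x in c..d,
        ((∫ y in a..b, heatKernel t x y) -
          Set.indicator (Set.Ioo a b) (fun _ => (1 : ℝ)) x)|
      ≤ 4 * Real.sqrt t := by
  set err : ℝ → ℝ → ℝ := fun e x =>
    (∫ y in Iic e, heatKernel t x y) - (Iic e).indicator (fun _ => 1) x
  set tail : ℝ → ℝ → ℝ := fun e x => exp (-(4 * t)⁻¹ * (x - e) ^ 2) / 2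
  have htail (e : ℝ) : Integrable (tail e) :=
    ((integrable_exp_neg_mul_sq (by positivity)).comp_sub_right e).div_const 2
  have hdecomp : ∀ᵐ x, (∫ y in a..b, heatKernel t x y) - (Ioo a b).indicator (fun _ => 1) x
      = err b x - err a x := by
    filter_upwards [indicator_ae_eq_of_ae_eq_set (f := fun _ => (1 : ℝ))
      (Ioo_ae_eq_Ioc (μ := volume))] with x hx
    rw [hx, ← Iic_sdiff_Iic, indicator_sdiff (Iic_subset_Iic.2 hab.le),
      ← intervalIntegral.integral_Iic_sub_Iic (integrable_heatKernel ht x).integrableOn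
        (integrable_heatKernel ht x).integrableOn]
    simp only [err, Pi.sub_apply]
    ring
  calc _ = |∫ x in c..d, err b x - err a x| := by
        rw [intervalIntegral.integral_congr_ae (hdecomp.mono fun x hx _ => hx)]
    _ ≤ ∫ x, tail b x + tail a x := by
        rw [← norm_eq_abs]
        refine norm_intervalIntegral_le_integral_of_norm_le ((htail b).add (htail a))
          (ae_of_all _ fun x => ?_) c d
        exact (norm_sub_le _ _).trans (add_le_add
          (abs_setIntegral_Iic_heatKernel_sub_indicator_le ht x b)
          (abs_setIntegral_Iic_heatKernel_sub_indicator_le ht x a))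
    _ = √(π / (4 * t)⁻¹) := by
        rw [integral_add (htail b) (htail a)]
        simp only [tail, integral_div, integral_exp_neg_mul_sq_sub]
        ring
    _ ≤ 4 * √t := sqrt_pi_div_inv_four_mul_le ht.le

/-- One-dimensional instance of the bound `|∫ (h_t χ_E − χ_E) χ_F| ≤ 2·|Dχ_E|·√t`,
with `E = (a,b)` of perimeter `2` and `F = (c,d)`. -/
theorem stmt_16 (a b c d t : ℝ) (hab : a < b) (hcd : c < d) (ht : 0 < t) :
    |∫ x in c..d,
        ((∫ y in a..b, heatKernel t x y) -
          Set.indicator (Set.Ioo a b) (fun _ => (1 : ℝ)) x)|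
      ≤ 4 * Real.sqrt t :=
  stmt_16_general a b c d t hab ht
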